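/- arXiv:2004.08000 — 6 statements merged into one kernel-verified Lean document; each statement's English description precedes it below -/
import Mathlib

section
/- Let m ≥ 1 and let f, κ : ℝ^m → ℝ be twice continuously differentiable on a neighborhood of a point x ∈ ℝ^m, with κ strictly positive on that neighborhood. Then lim_{h→0⁺} (2(m+2)/(ν_m h^{m+2})) ∫_{B_h(x)} √(κ(x)κ(y)) (f(x) − f(y)) dy = − div(κ∇f)(x), where the integral is with respect to Lebesgue measure on ℝ^m. -/
open MeasureTheory Filter Topology

/-- The Lebesgue volume of the unit ball in `ℝ^m`. -/
noncomputable def unitBallVol (m : ℕ) : ℝ :=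
  (volume (Metric.ball (0 : EuclideanSpace ℝ (Fin m)) 1)).toReal

/-- The divergence-form elliptic operator `div(κ∇f)(x) = ∑ i, ∂/∂x_i (κ ∂f/∂x_i)(x)`. -/
noncomputable def divKGrad (m : ℕ) (κ f : EuclideanSpace ℝ (Fin m) → ℝ)
    (x : EuclideanSpace ℝ (Fin m)) : ℝ :=
  ∑ i : Fin m,
    fderiv ℝ (fun y => κ y * fderiv ℝ f y (EuclideanSpace.single i 1)) x
      (EuclideanSpace.single i 1)

/-!
Put `g y = √(κ x κ y) (f x - f y)`, so that `g x = 0`. By Taylor's formula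
`g (x + z) = g'(x) z + ½ g''(x)(z, z) + o(‖z‖²)`. On the ball `B_h(0)` the linear term integrates
to zero by symmetry, and `∫ z_i z_j = δ_ij ν_m h^(m+2) / (m+2)` (sign flips and permutations of the
coordinates, together with polar coordinates for `∫ ‖z‖²`), so the quadratic term contributes
`ν_m h^(m+2) / (2(m+2)) · Δg(x)`, while the remainder is `o(h^(m+2))`. The normalised integrals
therefore tend to `Δg(x)`, and since `g x = 0` and `∂ᵢ √(κ x κ ·)(x) = ∂ᵢκ(x) / 2`, the Leibniz
rule gives `Δg(x) = -div(κ∇f)(x)`.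
-/

open Metric Set Asymptotics Module

theorem ContinuousOn.integrableOn_ball {E F : Type*} [NormedAddCommGroup E] [ProperSpace E]
    [MeasurableSpace E] [OpensMeasurableSpace E] [NormedAddCommGroup F] {μ : Measure E}
    [IsFiniteMeasureOnCompacts μ] {g : E → F} {x : E} {r : ℝ}
    (hg : ContinuousOn g (closedBall x r)) : IntegrableOn g (ball x r) μ :=
  (hg.integrableOn_compact (isCompact_closedBall x r)).mono_set ball_subset_closedBall

theorem setIntegral_ball_zero_comp_add_left {E F : Type*} [NormedAddCommGroup E]
    [MeasurableSpace E] [BorelSpace E] [NormedAddCommGroup F] [NormedSpace ℝ F]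
    (μ : Measure E) [μ.IsAddLeftInvariant] (g : E → F) (x : E) (h : ℝ) :
    ∫ z in ball (0 : E) h, g (x + z) ∂μ = ∫ y in ball x h, g y ∂μ := by
  have hpre : (x + ·) ⁻¹' ball x h = ball (0 : E) h := by
    ext z
    simp
  rw [← hpre]
  exact (measurePreserving_add_left μ x).setIntegral_preimage_emb
    (Homeomorph.addLeft x).measurableEmbedding g _

section HaarBall

variable {E : Type*} [NormedAddCommGroup E] [NormedSpace ℝ E] [FiniteDimensional ℝ E]
  [MeasurableSpace E] [BorelSpace E] (μ : Measure E) [μ.IsAddHaarMeasure]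

theorem setIntegral_ball_norm_pow [Nontrivial E] (k : ℕ) {h : ℝ} (hh : 0 ≤ h) :
    ∫ z in ball (0 : E) h, ‖z‖ ^ k ∂μ =
      finrank ℝ E / (finrank ℝ E + k) * μ.real (ball 0 1) * h ^ (finrank ℝ E + k) := by
  have hd : 0 < finrank ℝ E := finrank_pos
  have hradial : (fun z : E => (ball (0 : E) h).indicator (fun z => ‖z‖ ^ k) z)
      = fun z => (Iio h).indicator (fun r : ℝ => r ^ k) ‖z‖ := by
    ext z
    by_cases hz : ‖z‖ < h <;> simp [indicator, hz]
  have hpolar : ∀ r ∈ Ioi (0 : ℝ), r ^ (finrank ℝ E - 1) • (Iio h).indicator (fun r => r ^ k) r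
      = (Iio h).indicator (fun r => r ^ (finrank ℝ E - 1 + k)) r := by
    intro r _
    by_cases hr : r < h <;> simp [indicator, hr, pow_add]
  rw [← integral_indicator measurableSet_ball, hradial, integral_fun_norm_addHaar,
    setIntegral_congr_fun measurableSet_Ioi hpolar, setIntegral_indicator measurableSet_Iio,
    Ioi_inter_Iio, ← integral_Ioc_eq_integral_Ioo, ← intervalIntegral.integral_of_le hh,
    integral_pow, show finrank ℝ E - 1 + k + 1 = finrank ℝ E + k by omega, nsmul_eq_mul,
    smul_eq_mul, zero_pow (by omega), sub_zero]
  have : (finrank ℝ E : ℝ) + k ≠ 0 := by positivity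
  push_cast [Nat.cast_pred hd]
  rw [show (finrank ℝ E : ℝ) - 1 + k + 1 = finrank ℝ E + k by ring]
  field_simp

theorem isLittleO_setIntegral_ball_of_isLittleO {F : Type*} [NormedAddCommGroup F]
    [NormedSpace ℝ F] {φ : E → F} {k : ℕ} (hφ : φ =o[𝓝 0] fun z => ‖z‖ ^ k) :
    (fun h : ℝ => ∫ z in ball (0 : E) h, φ z ∂μ) =o[𝓝[>] 0] fun h => h ^ (finrank ℝ E + k) := by
  refine isLittleO_iff.mpr fun c hc => ?_
  have hν : 0 < μ.real (ball (0 : E) 1) + 1 := by positivity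
  obtain ⟨δ, hδ, hφδ⟩ := Metric.eventually_nhds_iff_ball.mp
    (isLittleO_iff.mp hφ (div_pos hc hν))
  filter_upwards [Ioo_mem_nhdsGT hδ] with h ⟨hh, hhδ⟩
  have hbound : ∀ z ∈ ball (0 : E) h, ‖φ z‖ ≤ c / (μ.real (ball (0 : E) 1) + 1) * h ^ k := by
    intro z hz
    have hzh : ‖z‖ < h := mem_ball_zero_iff.mp hz
    calc ‖φ z‖ ≤ c / (μ.real (ball (0 : E) 1) + 1) * ‖‖z‖ ^ k‖ :=
          hφδ z (ball_subset_ball hhδ.le hz)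
      _ ≤ c / (μ.real (ball (0 : E) 1) + 1) * h ^ k := by
          rw [norm_pow, norm_norm]; gcongr
  have hvol : μ.real (ball (0 : E) h) ≤ h ^ finrank ℝ E * μ.real (ball 0 1) := by
    rw [← Measure.addHaar_real_closedBall μ 0 hh.le]
    exact measureReal_mono ball_subset_closedBall measure_closedBall_lt_top.ne
  calc ‖∫ z in ball (0 : E) h, φ z ∂μ‖
      ≤ c / (μ.real (ball (0 : E) 1) + 1) * h ^ k * μ.real (ball (0 : E) h) :=
        norm_setIntegral_le_of_norm_le_const measure_ball_lt_top hbound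
    _ ≤ c / (μ.real (ball (0 : E) 1) + 1) * h ^ k * (h ^ finrank ℝ E * μ.real (ball 0 1)) := by
        gcongr
    _ = c * (μ.real (ball (0 : E) 1) / (μ.real (ball (0 : E) 1) + 1)) * h ^ (finrank ℝ E + k) := by
        ring
    _ ≤ c * ‖h ^ (finrank ℝ E + k)‖ := by
        rw [norm_pow, Real.norm_of_nonneg hh.le]
        gcongr
        exact mul_le_of_le_one_right hc.le ((div_le_one hν).mpr (lt_add_one _).le)

end HaarBall

section Isometry

variable {E : Type*} [NormedAddCommGroup E] [InnerProductSpace ℝ E] [FiniteDimensional ℝ E]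
  [MeasurableSpace E] [BorelSpace E] {F : Type*} [NormedAddCommGroup F] [NormedSpace ℝ F]

theorem setIntegral_ball_zero_comp_linearIsometryEquiv (T : E ≃ₗᵢ[ℝ] E) (g : E → F) (h : ℝ) :
    ∫ z in ball (0 : E) h, g (T z) = ∫ z in ball (0 : E) h, g z := by
  have hpre : T ⁻¹' ball (0 : E) h = ball 0 h := by
    ext z
    simp
  conv_lhs => rw [← hpre]
  exact T.measurePreserving.setIntegral_preimage_emb T.toHomeomorph.measurableEmbedding g _

theorem setIntegral_ball_zero_clm_eq_zero (L : E →L[ℝ] F) (h : ℝ) :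
    ∫ z in ball (0 : E) h, L z = 0 := by
  have hodd := setIntegral_ball_zero_comp_linearIsometryEquiv (.neg ℝ) (fun z => L z) h
  simp only [LinearIsometryEquiv.coe_neg, map_neg, integral_neg] at hodd
  rw [neg_eq_iff_add_eq_zero, ← two_smul ℝ, smul_eq_zero] at hodd
  exact hodd.resolve_left two_ne_zero

end Isometry

section Calculus

variable {E F : Type*} [NormedAddCommGroup E] [NormedSpace ℝ E] [NormedAddCommGroup F]
  [NormedSpace ℝ F]

theorem ContinuousLinearMap.hasFDerivAt_half_apply_sub_self {B : E →L[ℝ] E →L[ℝ] F}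
    (hB : ∀ v w, B v w = B w v) (x y : E) :
    HasFDerivAt (fun y => (2 : ℝ)⁻¹ • B (y - x) (y - x)) (B (y - x)) y := by
  have hsub : HasFDerivAt (fun y : E => y - x) (ContinuousLinearMap.id ℝ E) y :=
    (hasFDerivAt_id y).sub_const x
  have := ((B.hasFDerivAt.comp y hsub).clm_apply hsub).const_smul (2 : ℝ)⁻¹
  convert this using 1
  · rfl
  · ext w
    simp only [smul_apply, add_apply,
      ContinuousLinearMap.comp_id, ContinuousLinearMap.flip_apply, Function.comp_apply,
      hB w (y - x)]
    module

theorem ContDiffAt.isLittleO_sub_taylor_two {g : E → F} {x : E} (hg : ContDiffAt ℝ 2 g x) :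
    (fun y => g y - g x - fderiv ℝ g x (y - x) -
        (2 : ℝ)⁻¹ • fderiv ℝ (fderiv ℝ g) x (y - x) (y - x)) =o[𝓝 x]
      fun y => ‖y - x‖ ^ 2 := by
  set B := fderiv ℝ (fderiv ℝ g) x
  have hsymm : ∀ v w, B v w = B w v := hg.isSymmSndFDerivAt (by simp)
  have hB : HasFDerivAt (fderiv ℝ g) B x :=
    ((hg.fderiv_right (m := 1) le_rfl).differentiableAt one_ne_zero).hasFDerivAt
  obtain ⟨r, hr, hdiff⟩ := Metric.eventually_nhds_iff_ball.mp
    ((hg.eventually (by simp)).mono fun y hy => hy.differentiableAt two_ne_zero)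
  have hderiv : ∀ y ∈ ball x r, HasFDerivWithinAt
      (fun y => g y - g x - fderiv ℝ g x (y - x) - (2 : ℝ)⁻¹ • B (y - x) (y - x))
      (fderiv ℝ g y - fderiv ℝ g x - B (y - x)) (ball x r) y := fun y hy =>
    ((((hdiff y hy).hasFDerivAt.sub_const (g x)).sub
      (((fderiv ℝ g x).hasFDerivAt.comp y ((hasFDerivAt_id y).sub_const x)))).sub
      (B.hasFDerivAt_half_apply_sub_self hsymm x y)).hasFDerivWithinAt
  have hB' : (fun y => fderiv ℝ g y - fderiv ℝ g x - B (y - x)) =o[𝓝[ball x r] x]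
      fun y => ‖y - x‖ ^ 1 := by
    simpa using hB.isLittleO.norm_right.mono nhdsWithin_le_nhds
  have := (convex_ball x r).isLittleO_pow_succ (mem_ball_self hr) hderiv hB'
  rw [nhdsWithin_eq_nhds.mpr (ball_mem_nhds x hr)] at this
  simpa using this

variable {p q : E → ℝ} {x : E}

theorem fderiv_fderiv_mul_apply (hp : ContDiffAt ℝ 2 p x) (hq : ContDiffAt ℝ 2 q x) (v w : E) :
    fderiv ℝ (fderiv ℝ fun y => p y * q y) x v w =
      fderiv ℝ (fderiv ℝ p) x v w * q x + fderiv ℝ p x v * fderiv ℝ q x w +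
        fderiv ℝ p x w * fderiv ℝ q x v + p x * fderiv ℝ (fderiv ℝ q) x v w := by
  have hp' : DifferentiableAt ℝ (fderiv ℝ p) x :=
    (hp.fderiv_right (m := 1) le_rfl).differentiableAt one_ne_zero
  have hq' : DifferentiableAt ℝ (fderiv ℝ q) x :=
    (hq.fderiv_right (m := 1) le_rfl).differentiableAt one_ne_zero
  have hprod : fderiv ℝ (fun y => p y * q y) =ᶠ[𝓝 x]
      fun y => p y • fderiv ℝ q y + q y • fderiv ℝ p y := by
    filter_upwards [hp.eventually (by simp), hq.eventually (by simp)] with y hpy hqy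
    exact fderiv_mul (hpy.differentiableAt two_ne_zero) (hqy.differentiableAt two_ne_zero)
  have hderiv : HasFDerivAt (fun y => p y • fderiv ℝ q y + q y • fderiv ℝ p y) _ x :=
    ((hp.differentiableAt two_ne_zero).hasFDerivAt.smul hq'.hasFDerivAt).add
      ((hq.differentiableAt two_ne_zero).hasFDerivAt.smul hp'.hasFDerivAt)
  rw [hprod.fderiv_eq, hderiv.fderiv]
  simp only [add_apply, smul_apply, ContinuousLinearMap.smulRight_apply, smul_eq_mul]
  ring

theorem fderiv_mul_fderiv_apply (hp : DifferentiableAt ℝ p x) {f : E → ℝ}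
    (hf : DifferentiableAt ℝ (fderiv ℝ f) x) (v w : E) :
    fderiv ℝ (fun y => p y * fderiv ℝ f y w) x v =
      p x * fderiv ℝ (fderiv ℝ f) x v w + fderiv ℝ p x v * fderiv ℝ f x w := by
  have hderiv : HasFDerivAt (fun y => p y * fderiv ℝ f y w) _ x :=
    hp.hasFDerivAt.mul (hf.hasFDerivAt.clm_apply (hasFDerivAt_const w x))
  rw [hderiv.fderiv]
  simp only [ContinuousLinearMap.comp_zero, zero_add, add_apply, smul_apply,
    ContinuousLinearMap.flip_apply, smul_eq_mul]
  ring

theorem fderiv_sqrt_const_mul {κ : E → ℝ} (hκ : DifferentiableAt ℝ κ x) (hκx : 0 < κ x) :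
    fderiv ℝ (fun y => √(κ x * κ y)) x = (2 : ℝ)⁻¹ • fderiv ℝ κ x := by
  have := (hκ.hasFDerivAt.const_mul (κ x)).sqrt (by positivity)
  rw [this.fderiv, Real.sqrt_mul_self hκx.le]
  ext v
  simp only [one_div, mul_inv_rev, smul_apply, smul_eq_mul]
  field_simp

end Calculus

section Euclidean

variable {m : ℕ}

local notation "𝔼" => EuclideanSpace ℝ (Fin m)

theorem unitBallVol_pos : 0 < unitBallVol m :=
  ENNReal.toReal_pos (measure_ball_pos volume 0 one_pos).ne' measure_ball_lt_top.ne

theorem setIntegral_ball_norm_sq (hm : 1 ≤ m) {h : ℝ} (hh : 0 ≤ h) :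
    ∫ z in ball (0 : 𝔼) h, ‖z‖ ^ 2 = m / (m + 2) * unitBallVol m * h ^ (m + 2) := by
  have : Nontrivial 𝔼 := by
    have : Nonempty (Fin m) := ⟨⟨0, hm⟩⟩
    infer_instance
  rw [setIntegral_ball_norm_pow volume 2 hh, finrank_euclideanSpace_fin, unitBallVol,
    measureReal_def]
  push_cast; rfl

theorem setIntegral_ball_coord_mul_coord (hm : 1 ≤ m) (i j : Fin m) {h : ℝ} (hh : 0 ≤ h) :
    ∫ z in ball (0 : 𝔼) h, z i * z j =
      if i = j then unitBallVol m * h ^ (m + 2) / (m + 2) else 0 := by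
  split_ifs with hij
  · subst hij
    have hsame : ∀ k, ∫ z in ball (0 : 𝔼) h, z k * z k = ∫ z in ball (0 : 𝔼) h, z i * z i := by
      intro k
      rw [← setIntegral_ball_zero_comp_linearIsometryEquiv
        (LinearIsometryEquiv.piLpCongrLeft 2 ℝ ℝ (Equiv.swap k i)) (fun z => z k * z k) h]
      simp [LinearIsometryEquiv.piLpCongrLeft_apply, Equiv.piCongrLeft'_apply]
    have hsum : ∑ k, ∫ z in ball (0 : 𝔼) h, z k * z k = ∫ z in ball (0 : 𝔼) h, ‖z‖ ^ 2 := by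
      rw [← integral_finsetSum]
      · simp_rw [EuclideanSpace.norm_sq_eq, Real.norm_eq_abs, sq_abs, sq]
      · exact fun k _ => ((EuclideanSpace.proj k).continuous.mul
          (EuclideanSpace.proj k).continuous).continuousOn.integrableOn_ball
    rw [Finset.sum_congr rfl fun k _ => hsame k, Finset.sum_const, Finset.card_univ,
      Fintype.card_fin, nsmul_eq_mul, setIntegral_ball_norm_sq hm hh] at hsum
    have : (m : ℝ) ≠ 0 := by positivity
    field_simp at hsum ⊢
    linarith
  · have hflip := setIntegral_ball_zero_comp_linearIsometryEquiv
      (LinearIsometryEquiv.piLpCongrRight 2 fun k =>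
        if k = i then LinearIsometryEquiv.neg ℝ else LinearIsometryEquiv.refl ℝ ℝ)
      (fun z : 𝔼 => z i * z j) h
    simp only [LinearIsometryEquiv.piLpCongrRight_apply, ↓reduceIte, LinearIsometryEquiv.coe_neg,
      Ne.symm hij, LinearIsometryEquiv.coe_refl, id_eq, neg_mul, integral_neg] at hflip
    linarith

theorem ContinuousLinearMap.apply_self_eq_sum_coord (B : 𝔼 →L[ℝ] 𝔼 →L[ℝ] ℝ) (z : 𝔼) :
    B z z = ∑ i, ∑ j, z i * z j * B (EuclideanSpace.single i 1) (EuclideanSpace.single j 1) := by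
  conv_lhs => rw [← (EuclideanSpace.basisFun (Fin m) ℝ).sum_repr z]
  simp only [map_sum, map_smul, FunLike.coe_sum, Finset.sum_apply,
    FunLike.coe_smul, Pi.smul_apply, EuclideanSpace.basisFun_apply,
    EuclideanSpace.basisFun_repr, smul_eq_mul, Finset.mul_sum, mul_assoc]
  rw [Finset.sum_comm]
  exact Finset.sum_congr rfl fun _ _ => Finset.sum_congr rfl fun _ _ => by ring

theorem setIntegral_ball_bilinear_self (hm : 1 ≤ m) (B : 𝔼 →L[ℝ] 𝔼 →L[ℝ] ℝ) {h : ℝ}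
    (hh : 0 ≤ h) :
    ∫ z in ball (0 : 𝔼) h, B z z =
      (∑ i, B (EuclideanSpace.single i 1) (EuclideanSpace.single i 1)) *
        (unitBallVol m * h ^ (m + 2) / (m + 2)) := by
  have hint : ∀ i j : Fin m, IntegrableOn (fun z : 𝔼 =>
      z i * z j * B (EuclideanSpace.single i 1) (EuclideanSpace.single j 1)) (ball 0 h) :=
    fun i j => (((EuclideanSpace.proj i).continuous.mul (EuclideanSpace.proj j).continuous).mul
      continuous_const).continuousOn.integrableOn_ball
  simp_rw [B.apply_self_eq_sum_coord]
  rw [integral_finsetSum _ fun i _ => integrable_finsetSum _ fun j _ => hint i j,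
    Finset.sum_mul]
  refine Finset.sum_congr rfl fun i _ => ?_
  simp_rw [integral_finsetSum _ fun j _ => hint i j, integral_mul_const,
    setIntegral_ball_coord_mul_coord hm _ _ hh]
  simp [mul_comm]

theorem tendsto_scaled_setIntegral_ball_laplacian (hm : 1 ≤ m) {g : 𝔼 → ℝ} {x : 𝔼}
    (hg : ContDiffAt ℝ 2 g x) (hgx : g x = 0) :
    Tendsto (fun h : ℝ => 2 * (m + 2) / (unitBallVol m * h ^ (m + 2)) * ∫ y in ball x h, g y)
      (𝓝[>] 0) (𝓝 (∑ i, fderiv ℝ (fderiv ℝ g) x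
        (EuclideanSpace.single i 1) (EuclideanSpace.single i 1))) := by
  set L := fderiv ℝ g x
  set B := fderiv ℝ (fderiv ℝ g) x
  set φ : 𝔼 → ℝ := fun y => g y - g x - L (y - x) - (2 : ℝ)⁻¹ • B (y - x) (y - x)
  have hν : 0 < unitBallVol m := unitBallVol_pos
  have hremainder : Tendsto (fun h : ℝ => 2 * (m + 2) / (unitBallVol m * h ^ (m + 2)) *
      ∫ z in ball (0 : 𝔼) h, φ (x + z)) (𝓝[>] 0) (𝓝 0) := by
    have hφ : (fun z => φ (x + z)) =o[𝓝 0] fun z : 𝔼 => ‖z‖ ^ 2 := by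
      have := hg.isLittleO_sub_taylor_two.comp_tendsto
        (continuous_const_add x |>.tendsto' 0 x (add_zero x))
      exact this.congr_right fun z => by simp
    have := ((isLittleO_setIntegral_ball_of_isLittleO volume hφ).tendsto_div_nhds_zero).const_mul
      (2 * (m + 2) / unitBallVol m)
    rw [finrank_euclideanSpace_fin, mul_zero] at this
    refine this.congr fun h => ?_
    ring
  obtain ⟨r, hr, hcont⟩ := Metric.eventually_nhds_iff_ball.mp
    ((hg.eventually (by simp)).mono fun y hy => hy.continuousAt)
  have hsplit : ∀ h ∈ Ioo 0 r, ∫ y in ball x h, g y =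
      2⁻¹ * ((∑ i, B (EuclideanSpace.single i 1) (EuclideanSpace.single i 1)) *
        (unitBallVol m * h ^ (m + 2) / (m + 2))) + ∫ z in ball (0 : 𝔼) h, φ (x + z) := by
    rintro h ⟨hh, hhr⟩
    have hgint : IntegrableOn (fun z => g (x + z)) (ball (0 : 𝔼) h) := by
      refine ContinuousOn.integrableOn_ball (continuousOn_of_forall_continuousAt fun z hz => ?_)
      have hxz : x + z ∈ ball x r := by
        simpa using (mem_closedBall_zero_iff.mp hz).trans_lt hhr
      exact (hcont _ hxz).comp (continuous_const_add x).continuousAt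
    have hLint : IntegrableOn (fun z => L z) (ball (0 : 𝔼) h) :=
      L.continuous.continuousOn.integrableOn_ball
    have hBint : IntegrableOn (fun z => 2⁻¹ * B z z) (ball (0 : 𝔼) h) := by
      refine ContinuousOn.integrableOn_ball (Continuous.continuousOn ?_)
      fun_prop
    have hφ : ∫ z in ball (0 : 𝔼) h, φ (x + z) =
        (∫ z in ball (0 : 𝔼) h, g (x + z)) - ((∫ z in ball (0 : 𝔼) h, L z) +
          ∫ z in ball (0 : 𝔼) h, 2⁻¹ * B z z) := by
      have hLBint : IntegrableOn (fun z => L z + 2⁻¹ * B z z) (ball (0 : 𝔼) h) :=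
        hLint.add hBint
      rw [← integral_add hLint hBint, ← integral_sub hgint hLBint]
      refine integral_congr_ae (Eventually.of_forall fun z => ?_)
      simp only [φ, hgx, sub_zero, map_sub, sub_apply, smul_eq_mul, map_add, add_sub_cancel_left,
        add_apply]
      ring
    rw [hφ, setIntegral_ball_zero_clm_eq_zero, integral_const_mul,
      setIntegral_ball_bilinear_self hm B hh.le, setIntegral_ball_zero_comp_add_left]
    ring
  have := (tendsto_const_nhds (x := ∑ i, B (EuclideanSpace.single i 1)
    (EuclideanSpace.single i 1))).add hremainder
  rw [add_zero] at this
  refine this.congr' ?_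
  filter_upwards [Ioo_mem_nhdsGT hr] with h hh
  rw [hsplit h hh]
  have : h ≠ 0 := hh.1.ne'
  field_simp

theorem sum_fderiv_fderiv_sqrt_mul_sub_eq_neg_divKGrad {f κ : 𝔼 → ℝ} {x : 𝔼}
    (hf : ContDiffAt ℝ 2 f x) (hκ : ContDiffAt ℝ 2 κ x) (hκx : 0 < κ x) :
    ∑ i, fderiv ℝ (fderiv ℝ fun y => √(κ x * κ y) * (f x - f y)) x
        (EuclideanSpace.single i 1) (EuclideanSpace.single i 1) = -divKGrad m κ f x := by
  have hp : ContDiffAt ℝ 2 (fun y => √(κ x * κ y)) x :=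
    (contDiffAt_const.mul hκ).sqrt (by positivity)
  have hq : ContDiffAt ℝ 2 (fun y => f x - f y) x := contDiffAt_const.sub hf
  have hq' : fderiv ℝ (fun y => f x - f y) = -fderiv ℝ f :=
    funext fun y => fderiv_const_sub (f x)
  have hf' : DifferentiableAt ℝ (fderiv ℝ f) x :=
    (hf.fderiv_right (m := 1) le_rfl).differentiableAt one_ne_zero
  rw [divKGrad, ← Finset.sum_neg_distrib]
  refine Finset.sum_congr rfl fun i _ => ?_
  rw [fderiv_fderiv_mul_apply hp hq, hq', fderiv_neg,
    fderiv_mul_fderiv_apply (hκ.differentiableAt two_ne_zero) hf',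
    fderiv_sqrt_const_mul (hκ.differentiableAt two_ne_zero) hκx, Real.sqrt_mul_self hκx.le]
  simp only [sub_self, mul_zero, smul_apply, smul_eq_mul, Pi.neg_apply, neg_apply, mul_neg,
    zero_add]
  ring

end Euclidean

theorem stmt_4 (m : ℕ) (hm : 1 ≤ m) (f κ : EuclideanSpace ℝ (Fin m) → ℝ)
    (x : EuclideanSpace ℝ (Fin m)) (U : Set (EuclideanSpace ℝ (Fin m)))
    (hU : IsOpen U) (hxU : x ∈ U) (hf : ContDiffOn ℝ 2 f U) (hκ : ContDiffOn ℝ 2 κ U)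
    (hκpos : ∀ y ∈ U, 0 < κ y) :
    Tendsto (fun h : ℝ =>
        (2 * ((m : ℝ) + 2)) / (unitBallVol m * h ^ (m + 2)) *
          ∫ y in Metric.ball x h, Real.sqrt (κ x * κ y) * (f x - f y))
      (𝓝[>] 0) (𝓝 (-(divKGrad m κ f x))) := by
  have hfx : ContDiffAt ℝ 2 f x := hf.contDiffAt (hU.mem_nhds hxU)
  have hκx : ContDiffAt ℝ 2 κ x := hκ.contDiffAt (hU.mem_nhds hxU)
  have hκx_pos : 0 < κ x := hκpos x hxU
  have hg : ContDiffAt ℝ 2 (fun y => √(κ x * κ y) * (f x - f y)) x :=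
    ((contDiffAt_const.mul hκx).sqrt (by positivity)).mul (contDiffAt_const.sub hfx)
  rw [← sum_fderiv_fderiv_sqrt_mul_sub_eq_neg_divKGrad hfx hκx hκx_pos]
  exact tendsto_scaled_setIntegral_ball_laplacian hm hg (by simp)
end

section
/- Let m ≥ 1, r > 0, α ≥ 1, and let κ : ℝ^m → ℝ be Lipschitz with Lipschitz constant Lip(κ) and satisfy 1/α ≤ κ(x) ≤ α for all x. Then for every continuously differentiable, compactly supported f : ℝ^m → ℝ: ∬_{|x−y|<r} |f(x) − f(y)|² √(κ(x)κ(y)) dx dy ≤ (1 + Lip(κ) α r) · (ν_m r^{m+2}/(m+2)) · ∫_{ℝ^m} κ(x) |∇f(x)|² dx, where all integrals are with respect to Lebesgue measure on ℝ^m. -/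
/-!
Write `y = x + z` with `‖z‖ < r`. Along the segment `t ↦ x + t • z`, the fundamental theorem of
calculus and Jensen give `(f x - f y)² ≤ ∫₀¹ ⟪∇f (x + t • z), z⟫² dt`, and since `α κ ≥ 1` the
Lipschitz bound turns `κ u ≤ κ w + Lip(κ) r` into `√(κ x κ y) ≤ (1 + Lip(κ) α r) κ (x + t • z)`.
Integrating over `x`, `z ∈ B(0, r)` and `t ∈ (0, 1]`, the substitution `w = x + t • z` (Tonelli and
translation invariance) leaves `∫ κ w ∫_{B(0,r)} ⟪∇f w, z⟫² dz dw`. The inner integral depends only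
on `‖∇f w‖` because reflections preserve the ball, so summing over an orthonormal basis gives
`‖∇f w‖² · (1/n) ∫_{B(0,r)} ‖z‖² dz = ‖∇f w‖² ν_n r^(n+2)/(n+2)`.

The computation is done with `ℝ≥0∞`-valued integrals, where Tonelli needs no integrability;
the compact support of `f` only serves to come back to Bochner integrals at the end.
-/

open MeasureTheory

open Metric Set
open scoped ENNReal NNReal RealInnerProductSpace Gradient

theorem Continuous.integrableOn_ball {X : Type*} [MetricSpace X] [ProperSpace X]
    [MeasurableSpace X] [OpensMeasurableSpace X] {μ : Measure X} [IsFiniteMeasureOnCompacts μ]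
    {φ : X → ℝ} (hφ : Continuous φ) (x : X) (r : ℝ) : IntegrableOn φ (ball x r) μ :=
  (hφ.continuousOn.integrableOn_compact (isCompact_closedBall x r)).mono_set ball_subset_closedBall

theorem integral_le_toReal_lintegral_ofReal {Ω : Type*} [MeasurableSpace Ω] {μ : Measure Ω}
    {g : Ω → ℝ} (hg : ∀ ω, 0 ≤ g ω) :
    ∫ ω, g ω ∂μ ≤ (∫⁻ ω, ENNReal.ofReal (g ω) ∂μ).toReal := by
  simpa only [Real.norm_of_nonneg (hg _)] using
    (Real.le_norm_self _).trans (norm_integral_le_lintegral_norm g)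

theorem sq_integral_le_integral_sq {Ω : Type*} [MeasurableSpace Ω] {μ : Measure Ω}
    [IsProbabilityMeasure μ] {h : Ω → ℝ} (hh : Integrable h μ)
    (hh2 : Integrable (fun ω => h ω ^ 2) μ) :
    (∫ ω, h ω ∂μ) ^ 2 ≤ ∫ ω, h ω ^ 2 ∂μ :=
  (even_two.convexOn_pow).map_integral_le (continuous_pow 2).continuousOn isClosed_univ
    (ae_of_all _ fun _ => mem_univ _) hh hh2

instance : IsProbabilityMeasure (volume.restrict (Ioc (0 : ℝ) 1)) := ⟨by simp⟩

section Gradient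

variable {E : Type*} [NormedAddCommGroup E] [InnerProductSpace ℝ E] [CompleteSpace E]
  {f : E → ℝ}

theorem ContDiff.continuous_gradient (hf : ContDiff ℝ 1 f) : Continuous (∇ f) :=
  (InnerProductSpace.toDual ℝ E).symm.continuous.comp (hf.continuous_fderiv one_ne_zero)

theorem HasCompactSupport.gradient (hf : HasCompactSupport f) : HasCompactSupport (∇ f) :=
  (hf.fderiv (𝕜 := ℝ)).comp_left (g := (InnerProductSpace.toDual ℝ E).symm) (map_zero _)

end Gradient

theorem sq_sub_le_integral_sq_fderiv_segment {E : Type*} [NormedAddCommGroup E]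
    [NormedSpace ℝ E] {f : E → ℝ} (hf : ContDiff ℝ 1 f) (x v : E) :
    (f (x + v) - f x) ^ 2 ≤ ∫ t in Ioc (0 : ℝ) 1, fderiv ℝ f (x + t • v) v ^ 2 := by
  set h : ℝ → ℝ := fun t => fderiv ℝ f (x + t • v) v
  have hcont : Continuous h :=
    ((hf.continuous_fderiv one_ne_zero).comp (by fun_prop)).clm_apply continuous_const
  have hderiv : ∀ t : ℝ, HasDerivAt (fun s : ℝ => f (x + s • v)) (h t) t := fun t =>
    ((hf.differentiable one_ne_zero) _).hasFDerivAt.comp_hasDerivAt t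
      (((hasDerivAt_id t).smul_const v).const_add x |>.congr_deriv (one_smul ℝ v))
  have hFTC : ∫ t in Ioc (0 : ℝ) 1, h t = f (x + v) - f x := by
    rw [← intervalIntegral.integral_of_le zero_le_one,
      intervalIntegral.integral_eq_sub_of_hasDerivAt (fun t _ => hderiv t)
        (hcont.intervalIntegrable 0 1)]
    simp
  rw [← hFTC]
  exact sq_integral_le_integral_sq hcont.integrableOn_Ioc (hcont.pow 2).integrableOn_Ioc

theorem LipschitzWith.le_one_add_mul_mul {X : Type*} [PseudoMetricSpace X] {κ : X → ℝ}
    {L : ℝ≥0} (hκ : LipschitzWith L κ) {α r : ℝ} (hr : 0 ≤ r) {u w : X}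
    (hw : 1 ≤ α * κ w) (huw : dist u w ≤ r) : κ u ≤ (1 + L * α * r) * κ w := by
  have hLip : κ u - κ w ≤ L * r :=
    (le_abs_self _).trans ((hκ.dist_le_mul u w).trans (by gcongr))
  nlinarith [mul_nonneg (mul_nonneg L.coe_nonneg hr) (sub_nonneg.mpr hw)]

theorem LipschitzWith.sqrt_mul_le {X : Type*} [PseudoMetricSpace X] {κ : X → ℝ}
    {L : ℝ≥0} (hκ : LipschitzWith L κ) {α : ℝ} (hα : 0 < α) (hκlb : ∀ x, 1 / α ≤ κ x)
    {r : ℝ} (hr : 0 ≤ r) {x y w : X} (hxw : dist x w ≤ r) (hyw : dist y w ≤ r) :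
    √(κ x * κ y) ≤ (1 + L * α * r) * κ w := by
  have hκ0 : ∀ x, 0 ≤ κ x := fun x => (one_div_pos.2 hα).le.trans (hκlb x)
  have hw : 1 ≤ α * κ w := by
    have := hκlb w
    rwa [div_le_iff₀ hα, mul_comm] at this
  have hx := hκ.le_one_add_mul_mul hr hw hxw
  have hy := hκ.le_one_add_mul_mul hr hw hyw
  calc √(κ x * κ y) ≤ √(((1 + L * α * r) * κ w) * ((1 + L * α * r) * κ w)) :=
        Real.sqrt_le_sqrt (mul_le_mul hx hy (hκ0 y) ((hκ0 x).trans hx))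
    _ = (1 + L * α * r) * κ w := Real.sqrt_mul_self ((hκ0 x).trans hx)

theorem sq_sub_mul_sqrt_le_integral_segment {E : Type*} [NormedAddCommGroup E]
    [InnerProductSpace ℝ E] [CompleteSpace E] {f : E → ℝ} (hf : ContDiff ℝ 1 f) {κ : E → ℝ}
    {L : ℝ≥0} (hκ : LipschitzWith L κ) {α : ℝ} (hα : 0 < α) (hκlb : ∀ x, 1 / α ≤ κ x)
    {r : ℝ} (hr : 0 ≤ r) (x : E) {v : E} (hv : ‖v‖ ≤ r) :
    (f x - f (x + v)) ^ 2 * √(κ x * κ (x + v))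
      ≤ (1 + L * α * r) * ∫ t in Ioc (0 : ℝ) 1, κ (x + t • v) * ⟪∇ f (x + t • v), v⟫ ^ 2 := by
  set h : ℝ → ℝ := fun t => fderiv ℝ f (x + t • v) v
  have hcont : Continuous h :=
    ((hf.continuous_fderiv one_ne_zero).comp (by fun_prop)).clm_apply continuous_const
  have hweight : ∀ t ∈ Ioc (0 : ℝ) 1, √(κ x * κ (x + v)) ≤ (1 + L * α * r) * κ (x + t • v) := by
    intro t ⟨ht0, ht1⟩
    refine hκ.sqrt_mul_le hα hκlb hr ?_ ?_
    · rw [dist_self_add_right, norm_smul, Real.norm_of_nonneg ht0.le]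
      nlinarith [norm_nonneg v]
    · rw [dist_add_left, dist_eq_norm, show v - t • v = (1 - t) • v by rw [sub_smul, one_smul],
        norm_smul, Real.norm_of_nonneg (sub_nonneg.2 ht1)]
      nlinarith [norm_nonneg v]
  calc (f x - f (x + v)) ^ 2 * √(κ x * κ (x + v))
      ≤ (∫ t in Ioc (0 : ℝ) 1, h t ^ 2) * √(κ x * κ (x + v)) := by
        rw [sub_sq_comm]
        gcongr
        exact sq_sub_le_integral_sq_fderiv_segment hf x v
    _ = ∫ t in Ioc (0 : ℝ) 1, h t ^ 2 * √(κ x * κ (x + v)) := (integral_mul_const _ _).symm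
    _ ≤ ∫ t in Ioc (0 : ℝ) 1, (1 + L * α * r) * (κ (x + t • v) * h t ^ 2) := by
        refine setIntegral_mono_on ((hcont.pow 2).mul continuous_const).integrableOn_Ioc
          (continuous_const.mul ((hκ.continuous.comp (by fun_prop)).mul
            (hcont.pow 2))).integrableOn_Ioc measurableSet_Ioc fun t ht => ?_
        nlinarith [hweight t ht, sq_nonneg (h t)]
    _ = _ := by simp_rw [integral_const_mul, inner_gradient_left, h]

section BallMoments

theorem integral_norm_sq_ball {F : Type*} [NormedAddCommGroup F] [NormedSpace ℝ F]
    [FiniteDimensional ℝ F] [MeasurableSpace F] [BorelSpace F] (μ : Measure F)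
    [μ.IsAddHaarMeasure] {r : ℝ} (hr : 0 ≤ r) :
    ∫ z in ball (0 : F) r, ‖z‖ ^ 2 ∂μ = Module.finrank ℝ F *
      (μ.real (ball 0 1) * r ^ (Module.finrank ℝ F + 2) / (Module.finrank ℝ F + 2)) := by
  cases subsingleton_or_nontrivial F
  · simp [Subsingleton.elim _ (0 : F), Module.finrank_zero_of_subsingleton]
  set n := Module.finrank ℝ F
  have hn : 0 < n := Module.finrank_pos
  have hradial := integral_fun_norm_addHaar μ ((Iio r).indicator fun s : ℝ => s ^ 2)
  have hball : ball (0 : F) r = (‖·‖) ⁻¹' Iio r := by ext; simp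
  rw [← integral_indicator measurableSet_ball, hball]
  have hind : ∀ z : F, ((‖·‖) ⁻¹' Iio r).indicator (fun z => ‖z‖ ^ 2) z
      = (Iio r).indicator (fun s : ℝ => s ^ 2) ‖z‖ := fun z => indicator_comp_right _
  simp_rw [hind]
  rw [hradial]
  have hpow : ∀ y : ℝ, y ^ (n - 1) • (Iio r).indicator (fun s : ℝ => s ^ 2) y
      = (Iio r).indicator (fun s : ℝ => s ^ (n + 1)) y := by
    intro y
    by_cases hy : y ∈ Iio r
    · simp only [indicator_of_mem hy, smul_eq_mul, ← pow_add]
      congr 1; omega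
    · simp [indicator_of_notMem hy]
  rw [setIntegral_congr_fun measurableSet_Ioi fun y _ => hpow y,
    setIntegral_indicator measurableSet_Iio, Ioi_inter_Iio, ← integral_Ioc_eq_integral_Ioo,
    ← intervalIntegral.integral_of_le hr, integral_pow, nsmul_eq_mul, smul_eq_mul]
  push_cast
  ring

variable {E : Type*} [NormedAddCommGroup E] [InnerProductSpace ℝ E] [FiniteDimensional ℝ E]
  [MeasurableSpace E] [BorelSpace E]

theorem setIntegral_ball_comp_linearIsometryEquiv (e : E ≃ₗᵢ[ℝ] E) (φ : E → ℝ) (r : ℝ) :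
    ∫ z in ball (0 : E) r, φ (e z) = ∫ z in ball (0 : E) r, φ z := by
  have hpre : e ⁻¹' ball 0 r = ball 0 r := by simp
  simpa only [hpre] using
    e.measurePreserving.setIntegral_preimage_emb e.toHomeomorph.measurableEmbedding φ (ball 0 r)

theorem integral_inner_sq_ball_eq_of_norm_eq {u w : E} (h : ‖u‖ = ‖w‖) (r : ℝ) :
    ∫ z in ball (0 : E) r, ⟪u, z⟫ ^ 2 = ∫ z in ball (0 : E) r, ⟪w, z⟫ ^ 2 := by
  set e := Submodule.reflection (ℝ ∙ (w - u))ᗮ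
  have hinner : ∀ z, ⟪u, z⟫ = ⟪w, e z⟫ := fun z => by
    rw [← Submodule.reflection_sub h.symm, ← e.inner_map_map, Submodule.reflection_reflection]
  simp_rw [hinner]
  exact setIntegral_ball_comp_linearIsometryEquiv e (fun z => ⟪w, z⟫ ^ 2) r

theorem integral_inner_sq_ball_of_norm_eq_one {u : E} (hu : ‖u‖ = 1) {r : ℝ} (hr : 0 ≤ r) :
    ∫ z in ball (0 : E) r, ⟪u, z⟫ ^ 2 = volume.real (ball (0 : E) 1) *
      r ^ (Module.finrank ℝ E + 2) / (Module.finrank ℝ E + 2) := by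
  have : Nontrivial E := nontrivial_of_ne u 0 (by rintro rfl; simp at hu)
  set b := stdOrthonormalBasis ℝ E
  have hsum : ∑ i, ∫ z in ball (0 : E) r, ⟪b i, z⟫ ^ 2 = ∫ z in ball (0 : E) r, ‖z‖ ^ 2 := by
    rw [← integral_finsetSum _ fun i _ =>
      ((continuous_const.inner continuous_id).pow 2).integrableOn_ball 0 r]
    simp_rw [b.sum_sq_inner_right]
  have hterm : ∀ i, ∫ z in ball (0 : E) r, ⟪b i, z⟫ ^ 2 = ∫ z in ball (0 : E) r, ⟪u, z⟫ ^ 2 :=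
    fun i => integral_inner_sq_ball_eq_of_norm_eq ((b.orthonormal.1 i).trans hu.symm) r
  simp only [hterm, Finset.sum_const, Finset.card_univ, Fintype.card_fin, nsmul_eq_mul,
    integral_norm_sq_ball volume hr] at hsum
  exact mul_left_cancel₀ (Nat.cast_ne_zero.mpr Module.finrank_pos.ne') hsum

theorem integral_inner_sq_ball (v : E) {r : ℝ} (hr : 0 ≤ r) :
    ∫ z in ball (0 : E) r, ⟪v, z⟫ ^ 2 = ‖v‖ ^ 2 * (volume.real (ball (0 : E) 1) *
      r ^ (Module.finrank ℝ E + 2) / (Module.finrank ℝ E + 2)) := by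
  rcases eq_or_ne v 0 with rfl | hv
  · simp
  have hunit : ‖‖v‖⁻¹ • v‖ = 1 := norm_smul_inv_norm hv
  have hscale : ∀ z, ⟪v, z⟫ ^ 2 = ‖v‖ ^ 2 * ⟪‖v‖⁻¹ • v, z⟫ ^ 2 := fun z => by
    rw [real_inner_smul_left, mul_pow, ← mul_assoc, ← mul_pow,
      mul_inv_cancel₀ (norm_ne_zero_iff.mpr hv), one_pow, one_mul]
  simp_rw [hscale, integral_const_mul, integral_inner_sq_ball_of_norm_eq_one hunit hr]

end BallMoments

theorem lintegral_lintegral_lintegral_add_smul {E : Type*} [NormedAddCommGroup E]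
    [NormedSpace ℝ E] [MeasurableSpace E] [BorelSpace E] [SecondCountableTopology E]
    (μ ν : Measure E) [SFinite μ] [μ.IsAddRightInvariant] [SFinite ν] (τ : Measure ℝ)
    [IsProbabilityMeasure τ] {Φ : E → E → ℝ≥0∞} (hΦ : Measurable (Function.uncurry Φ)) :
    ∫⁻ x, ∫⁻ z, ∫⁻ t, Φ (x + t • z) z ∂τ ∂ν ∂μ = ∫⁻ w, ∫⁻ z, Φ w z ∂ν ∂μ := by
  have hmeas : Measurable fun p : (E × E) × ℝ => Φ (p.1.1 + p.2 • p.1.2) p.1.2 :=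
    hΦ.comp (f := fun p : (E × E) × ℝ => (p.1.1 + p.2 • p.1.2, p.1.2)) (by fun_prop)
  calc ∫⁻ x, ∫⁻ z, ∫⁻ t, Φ (x + t • z) z ∂τ ∂ν ∂μ
      = ∫⁻ z, ∫⁻ x, ∫⁻ t, Φ (x + t • z) z ∂τ ∂μ ∂ν :=
        lintegral_lintegral_swap hmeas.lintegral_prod_right'.aemeasurable
    _ = ∫⁻ z, ∫⁻ t, ∫⁻ x, Φ (x + t • z) z ∂μ ∂τ ∂ν := lintegral_congr fun z =>
        lintegral_lintegral_swap
          (hmeas.comp (f := fun p : E × ℝ => ((p.1, z), p.2)) (by fun_prop)).aemeasurable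
    _ = ∫⁻ z, ∫⁻ w, Φ w z ∂μ ∂ν := lintegral_congr fun z => by
        simp_rw [lintegral_add_right_eq_self (fun w => Φ w z), lintegral_const, measure_univ,
          mul_one]
    _ = ∫⁻ w, ∫⁻ z, Φ w z ∂ν ∂μ := lintegral_lintegral_swap (hΦ.comp measurable_swap).aemeasurable

theorem setLIntegral_ball_eq_ball_zero {E : Type*} [NormedAddCommGroup E] [MeasurableSpace E]
    [BorelSpace E] (μ : Measure E) [μ.IsAddLeftInvariant] (F : E → ℝ≥0∞) (x : E) (r : ℝ) :
    ∫⁻ y in ball x r, F y ∂μ = ∫⁻ z in ball 0 r, F (x + z) ∂μ := by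
  simpa [preimage_add_ball] using ((measurePreserving_add_left μ x).setLIntegral_comp_preimage_emb
    (measurableEmbedding_addLeft x) F (ball x r)).symm

theorem lintegral_nonlocal_energy_le {E : Type*} [NormedAddCommGroup E] [InnerProductSpace ℝ E]
    [FiniteDimensional ℝ E] [MeasurableSpace E] [BorelSpace E] {f : E → ℝ}
    (hf : ContDiff ℝ 1 f) {κ : E → ℝ} {L : ℝ≥0} (hκ : LipschitzWith L κ) {α : ℝ} (hα : 0 < α)
    (hκlb : ∀ x, 1 / α ≤ κ x) {r : ℝ} (hr : 0 ≤ r) :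
    ∫⁻ x, ∫⁻ y in ball x r, ENNReal.ofReal ((f x - f y) ^ 2 * √(κ x * κ y))
      ≤ ENNReal.ofReal ((1 + L * α * r) * (volume.real (ball (0 : E) 1) *
          r ^ (Module.finrank ℝ E + 2) / (Module.finrank ℝ E + 2))) *
        ∫⁻ x, ENNReal.ofReal (κ x * ‖∇ f x‖ ^ 2) := by
  set C := 1 + L * α * r
  set c := volume.real (ball (0 : E) 1) * r ^ (Module.finrank ℝ E + 2) /
    (Module.finrank ℝ E + 2)
  set ρ : E → E → ℝ := fun w z => κ w * ⟪∇ f w, z⟫ ^ 2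
  have hκ0 : ∀ x, 0 ≤ κ x := fun x => (one_div_pos.2 hα).le.trans (hκlb x)
  have hρ : Continuous (Function.uncurry ρ) :=
    (hκ.continuous.comp continuous_fst).mul
      (((hf.continuous_gradient.comp continuous_fst).inner continuous_snd).pow 2)
  have hmoment : ∀ w, ∫⁻ z in ball 0 r, ENNReal.ofReal (ρ w z)
      = ENNReal.ofReal c * ENNReal.ofReal (κ w * ‖∇ f w‖ ^ 2) := fun w => by
    have hint : IntegrableOn (ρ w) (ball 0 r) :=
      (hρ.comp (Continuous.prodMk_right w)).integrableOn_ball 0 r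
    rw [← ofReal_integral_eq_lintegral_ofReal hint
        (ae_of_all _ fun z => mul_nonneg (hκ0 w) (sq_nonneg _)),
      ← ENNReal.ofReal_mul (by positivity), integral_const_mul, integral_inner_sq_ball _ hr]
    congr 1
    ring
  calc ∫⁻ x, ∫⁻ y in ball x r, ENNReal.ofReal ((f x - f y) ^ 2 * √(κ x * κ y))
      = ∫⁻ x, ∫⁻ z in ball 0 r, ENNReal.ofReal ((f x - f (x + z)) ^ 2 * √(κ x * κ (x + z))) :=
        lintegral_congr fun x => setLIntegral_ball_eq_ball_zero volume _ x r
    _ ≤ ∫⁻ x, ∫⁻ z in ball 0 r,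
          ENNReal.ofReal C * ∫⁻ t in Ioc (0 : ℝ) 1, ENNReal.ofReal (ρ (x + t • z) z) := by
        refine lintegral_mono fun x => setLIntegral_mono' measurableSet_ball fun z hz => ?_
        calc ENNReal.ofReal ((f x - f (x + z)) ^ 2 * √(κ x * κ (x + z)))
            ≤ ENNReal.ofReal (C * ∫ t in Ioc (0 : ℝ) 1, ρ (x + t • z) z) :=
              ENNReal.ofReal_le_ofReal (sq_sub_mul_sqrt_le_integral_segment hf hκ hα hκlb hr x
                (mem_ball_zero_iff.mp hz).le)
          _ ≤ ENNReal.ofReal C * ∫⁻ t in Ioc (0 : ℝ) 1, ENNReal.ofReal (ρ (x + t • z) z) := by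
              rw [ENNReal.ofReal_mul (by positivity)]
              gcongr
              exact ENNReal.ofReal_le_of_le_toReal (integral_le_toReal_lintegral_ofReal fun t =>
                mul_nonneg (hκ0 _) (sq_nonneg _))
    _ = ENNReal.ofReal C * ∫⁻ w, ∫⁻ z in ball 0 r, ENNReal.ofReal (ρ w z) := by
        simp_rw [lintegral_const_mul' _ _ ENNReal.ofReal_ne_top]
        rw [lintegral_lintegral_lintegral_add_smul (Φ := fun w z => ENNReal.ofReal (ρ w z))
          volume _ _ (ENNReal.measurable_ofReal.comp hρ.measurable)]
    _ = ENNReal.ofReal (C * c) * ∫⁻ x, ENNReal.ofReal (κ x * ‖∇ f x‖ ^ 2) := by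
        simp_rw [hmoment, lintegral_const_mul' _ _ ENNReal.ofReal_ne_top, ← mul_assoc,
          ENNReal.ofReal_mul (by positivity : 0 ≤ C)]

theorem integral_nonlocal_energy_le {E : Type*} [NormedAddCommGroup E] [InnerProductSpace ℝ E]
    [FiniteDimensional ℝ E] [MeasurableSpace E] [BorelSpace E] {f : E → ℝ}
    (hf : ContDiff ℝ 1 f) (hsupp : HasCompactSupport f) {κ : E → ℝ} {L : ℝ≥0}
    (hκ : LipschitzWith L κ) {α : ℝ} (hα : 0 < α) (hκlb : ∀ x, 1 / α ≤ κ x) {r : ℝ}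
    (hr : 0 ≤ r) :
    ∫ x, ∫ y in ball x r, (f x - f y) ^ 2 * √(κ x * κ y)
      ≤ (1 + L * α * r) * (volume.real (ball (0 : E) 1) *
          r ^ (Module.finrank ℝ E + 2) / (Module.finrank ℝ E + 2)) *
        ∫ x, κ x * ‖∇ f x‖ ^ 2 := by
  have hκ0 : ∀ x, 0 ≤ κ x := fun x => (one_div_pos.2 hα).le.trans (hκlb x)
  have hg_supp : HasCompactSupport fun x => κ x * ‖∇ f x‖ ^ 2 :=
    (hsupp.gradient.comp_left (g := fun v => ‖v‖ ^ 2) (by simp)).mul_left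
  have hg_cont : Continuous fun x => κ x * ‖∇ f x‖ ^ 2 :=
    hκ.continuous.mul (hf.continuous_gradient.norm.pow 2)
  have hg : Integrable fun x => κ x * ‖∇ f x‖ ^ 2 :=
    hg_cont.integrable_of_hasCompactSupport hg_supp
  calc ∫ x, ∫ y in ball x r, (f x - f y) ^ 2 * √(κ x * κ y)
      ≤ (∫⁻ x, ENNReal.ofReal (∫ y in ball x r, (f x - f y) ^ 2 * √(κ x * κ y))).toReal :=
        integral_le_toReal_lintegral_ofReal fun x => integral_nonneg fun y => by positivity
    _ ≤ (ENNReal.ofReal ((1 + L * α * r) * (volume.real (ball (0 : E) 1) *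
            r ^ (Module.finrank ℝ E + 2) / (Module.finrank ℝ E + 2))) *
          ∫⁻ x, ENNReal.ofReal (κ x * ‖∇ f x‖ ^ 2)).toReal := by
        refine ENNReal.toReal_mono (ENNReal.mul_ne_top ENNReal.ofReal_ne_top
          hg.lintegral_lt_top.ne) ((lintegral_mono fun x => ?_).trans
            (lintegral_nonlocal_energy_le hf hκ hα hκlb hr))
        exact ENNReal.ofReal_le_of_le_toReal
          (integral_le_toReal_lintegral_ofReal fun y => by positivity)
    _ = _ := by
        rw [ENNReal.toReal_mul, ENNReal.toReal_ofReal (by positivity),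
          ← integral_eq_lintegral_of_nonneg_ae
            (ae_of_all _ fun x => mul_nonneg (hκ0 x) (by positivity)) hg.aestronglyMeasurable]

theorem stmt_8_general (m : ℕ) (r : ℝ) (hr : 0 < r) (α : ℝ) (hα : 1 ≤ α)
    (κ : EuclideanSpace ℝ (Fin m) → ℝ) (L : NNReal) (hκLip : LipschitzWith L κ)
    (hκlb : ∀ x, 1 / α ≤ κ x)
    (f : EuclideanSpace ℝ (Fin m) → ℝ) (hf : ContDiff ℝ 1 f)
    (hsupp : HasCompactSupport f) :
    ∫ x, ∫ y in Metric.ball x r, (f x - f y) ^ 2 * Real.sqrt (κ x * κ y)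
      ≤ (1 + (L : ℝ) * α * r) * (unitBallVol m * r ^ (m + 2) / ((m : ℝ) + 2)) *
          ∫ x, κ x * ‖gradient f x‖ ^ 2 := by
  rw [unitBallVol, ← measureReal_def]
  simpa only [finrank_euclideanSpace_fin] using
    integral_nonlocal_energy_le hf hsupp hκLip (by linarith) hκlb hr.le

theorem stmt_8 (m : ℕ) (hm : 1 ≤ m) (r : ℝ) (hr : 0 < r) (α : ℝ) (hα : 1 ≤ α)
    (κ : EuclideanSpace ℝ (Fin m) → ℝ) (L : NNReal) (hκLip : LipschitzWith L κ)
    (hκlb : ∀ x, 1 / α ≤ κ x) (hκub : ∀ x, κ x ≤ α)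
    (f : EuclideanSpace ℝ (Fin m) → ℝ) (hf : ContDiff ℝ 1 f)
    (hsupp : HasCompactSupport f) :
    ∫ x, ∫ y in Metric.ball x r, (f x - f y) ^ 2 * Real.sqrt (κ x * κ y)
      ≤ (1 + (L : ℝ) * α * r) * (unitBallVol m * r ^ (m + 2) / ((m : ℝ) + 2)) *
          ∫ x, κ x * ‖gradient f x‖ ^ 2 :=
  stmt_8_general m r hr α hα κ L hκLip hκlb f hf hsupp
end

section
/- Let (X, d) be a metric space equipped with a Borel probability measure γ, let x_1, …, x_n ∈ X, let ε > 0, and let U_1, …, U_n be pairwise disjoint measurable sets covering X with γ(U_i) = 1/n and U_i ⊆ {x ∈ X : d(x, x_i) ≤ ε} for each i. For f ∈ L²(γ) define Pf(x_i) := n ∫_{U_i} f dγ. Then for every h > 0: (1/n²) Σ_{i=1}^n Σ_{j=1}^n 1{d(x_i,x_j) < h} |Pf(x_i) − Pf(x_j)|² ≤ ∬_{{(x,y) : d(x,y) < h + 2ε}} |f(x) − f(y)|² dγ(x) dγ(y). -/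
/-!
With `c_i = ∫_{U_i} f`, the `(i, j)` summand is `(c_i - c_j)^2`. Cauchy–Schwarz on `U_i × U_j`,
a set of mass `1/n^2`, bounds it by `∫_{U_i} ∫_{U_j} (f a - f b)^2`. For `a ∈ U_i` and
`d(x_i, x_j) < h`, every `b ∈ U_j` lies within `h + 2ε` of `a`, so summing over `j` (disjoint
cells) and then over `i` (a partition of `X`) gives the nonlocal energy. For the outer integral
to be meaningful, `a ↦ ∫_{B(a, r)} (f a - f b)^2` must be integrable; it is measurable because
`a ↦ ∫_{B(a, r)} φ` is lower semicontinuous for integrable `φ ≥ 0`.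
-/

open MeasureTheory Set Metric

section Integral

variable {X : Type*} [MeasurableSpace X]

theorem sq_integral_le_measureReal_mul_integral_sq (μ : Measure X) [IsFiniteMeasure μ]
    {φ : X → ℝ} (hφ : MemLp φ 2 μ) :
    (∫ x, φ x ∂μ) ^ 2 ≤ μ.real univ * ∫ x, φ x ^ 2 ∂μ := by
  rcases eq_zero_or_neZero μ with rfl | _
  · simp
  have hμ : 0 < μ.real univ := measureReal_univ_pos
  have jensen := even_two.convexOn_pow.map_average_le (continuousOn_pow 2) isClosed_univ
    (by simp) (hφ.integrable one_le_two) hφ.integrable_sq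
  simp only [average_eq, smul_eq_mul, mul_pow] at jensen
  have := mul_le_mul_of_nonneg_left jensen (sq_nonneg (μ.real univ))
  field_simp at this
  nlinarith

theorem integral_const_sub_sq (ν : Measure X) [IsFiniteMeasure ν] {f : X → ℝ}
    (hf : MemLp f 2 ν) (c : ℝ) :
    ∫ b, (c - f b) ^ 2 ∂ν = ν.real univ * c ^ 2 - 2 * c * ∫ b, f b ∂ν + ∫ b, f b ^ 2 ∂ν := by
  have hf1 := hf.integrable one_le_two
  have hlin : Integrable (fun b => 2 * c * f b) ν := hf1.const_mul _
  simp_rw [sub_sq]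
  rw [integral_add (f := fun b => c ^ 2 - 2 * c * f b) ((integrable_const _).sub hlin)
      hf.integrable_sq,
    integral_sub (integrable_const _) hlin, integral_const, smul_eq_mul, integral_const_mul]

theorem integrable_integral_sub_sq (μ ν : Measure X) [IsFiniteMeasure μ] [IsFiniteMeasure ν]
    {f : X → ℝ} (hμ : MemLp f 2 μ) (hν : MemLp f 2 ν) :
    Integrable (fun a => ∫ b, (f a - f b) ^ 2 ∂ν) μ := by
  simp_rw [integral_const_sub_sq ν hν]
  exact ((hμ.integrable_sq.const_mul _).sub
    (((hμ.integrable one_le_two).const_mul 2).mul_const _)).add (integrable_const _)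

theorem sq_sub_le_setIntegral_setIntegral_sub_sq (μ : Measure X) [IsFiniteMeasure μ]
    {f : X → ℝ} (hf : MemLp f 2 μ) (s t : Set X) :
    (μ.real t * ∫ a in s, f a ∂μ - μ.real s * ∫ b in t, f b ∂μ) ^ 2
      ≤ μ.real s * μ.real t * ∫ a in s, ∫ b in t, (f a - f b) ^ 2 ∂μ ∂μ := by
  set φ : X → ℝ := fun a => μ.real t * f a - ∫ b in t, f b ∂μ
  have hφ : ∀ a, ∫ b in t, (f a - f b) ∂μ = φ a := fun a => by
    rw [integral_sub (integrable_const _) ((hf.restrict t).integrable one_le_two),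
      setIntegral_const, smul_eq_mul]
  have hφs : MemLp φ 2 (μ.restrict s) := ((hf.restrict s).const_mul _).sub (memLp_const _)
  have hmean : ∫ a in s, φ a ∂μ
      = μ.real t * ∫ a in s, f a ∂μ - μ.real s * ∫ b in t, f b ∂μ := by
    rw [integral_sub (((hf.restrict s).integrable one_le_two).const_mul _) (integrable_const _),
      integral_const_mul, setIntegral_const, smul_eq_mul]
  have pointwise : ∀ a, φ a ^ 2 ≤ μ.real t * ∫ b in t, (f a - f b) ^ 2 ∂μ := fun a => by
    simpa only [Pi.sub_apply, hφ, measureReal_restrict_apply_univ] using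
      sq_integral_le_measureReal_mul_integral_sq (μ.restrict t)
        ((memLp_const (f a)).sub (hf.restrict t))
  have integrated : ∫ a in s, φ a ^ 2 ∂μ
      ≤ μ.real t * ∫ a in s, ∫ b in t, (f a - f b) ^ 2 ∂μ ∂μ := by
    rw [← integral_const_mul]
    exact integral_mono hφs.integrable_sq
      ((integrable_integral_sub_sq _ _ (hf.restrict s) (hf.restrict t)).const_mul _) pointwise
  calc _ = (∫ a in s, φ a ∂μ) ^ 2 := by rw [hmean]
    _ ≤ μ.real s * ∫ a in s, φ a ^ 2 ∂μ := by
      simpa only [measureReal_restrict_apply_univ] using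
        sq_integral_le_measureReal_mul_integral_sq (μ.restrict s) hφs
    _ ≤ _ := by rw [mul_assoc]; gcongr

theorem sq_setIntegral_sub_setIntegral_le (μ : Measure X) [IsFiniteMeasure μ] {f : X → ℝ}
    (hf : MemLp f 2 μ) {s t : Set X} (hst : μ.real s = μ.real t) (hs : μ.real s ≠ 0) :
    (∫ a in s, f a ∂μ - ∫ b in t, f b ∂μ) ^ 2
      ≤ ∫ a in s, ∫ b in t, (f a - f b) ^ 2 ∂μ ∂μ := by
  have := sq_sub_le_setIntegral_setIntegral_sub_sq μ hf s t
  rw [← hst, ← mul_sub, mul_pow, ← sq] at this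
  exact le_of_mul_le_mul_left this (by positivity)

theorem sum_setIntegral_le_setIntegral {ι : Type*} (μ : Measure X) {U : ι → Set X}
    (hU : ∀ i, MeasurableSet (U i)) (hdisj : Pairwise (Function.onFun Disjoint U)) {g : X → ℝ}
    {t : Set X} (hg : IntegrableOn g t μ) (hg0 : 0 ≤ g) (T : Finset ι) (hT : ∀ j ∈ T, U j ⊆ t) :
    ∑ j ∈ T, ∫ b in U j, g b ∂μ ≤ ∫ b in t, g b ∂μ := by
  rw [← integral_biUnion_finset T (fun j _ => hU j) (hdisj.set_pairwise _)
    (fun j hj => hg.mono_set (hT j hj))]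
  exact setIntegral_mono_set hg (.of_forall hg0) (iUnion₂_subset hT).eventuallyLE

end Integral

section Ball

variable {X : Type*} [PseudoMetricSpace X] [MeasurableSpace X]

theorem sum_boole_mul_setIntegral_le_setIntegral_ball {ι : Type*} [Fintype ι] (μ : Measure X)
    {U : ι → Set X} (hU : ∀ i, MeasurableSet (U i)) (hdisj : Pairwise (Function.onFun Disjoint U))
    {x : ι → X} {ε h : ℝ} (hUball : ∀ i, U i ⊆ closedBall (x i) ε) {g : X → ℝ}
    (hg : Integrable g μ) (hg0 : 0 ≤ g) {i : ι} {a : X} (ha : a ∈ U i) :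
    ∑ j, (if dist (x i) (x j) < h then (1 : ℝ) else 0) * ∫ b in U j, g b ∂μ
      ≤ ∫ b in ball a (h + 2 * ε), g b ∂μ := by
  simp_rw [boole_mul]
  rw [← Finset.sum_filter]
  refine sum_setIntegral_le_setIntegral μ hU hdisj hg.integrableOn hg0 _ fun j hj b hb => ?_
  have hij := (Finset.mem_filter.1 hj).2
  have hb := mem_closedBall.1 (hUball j hb)
  have ha := mem_closedBall'.1 (hUball i ha)
  rw [mem_ball]
  linarith [dist_triangle4 b (x j) (x i) a, dist_comm (x i) (x j)]

variable [OpensMeasurableSpace X]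

theorem lowerSemicontinuous_setIntegral_ball (μ : Measure X) {φ : X → ℝ} (hφ : Integrable φ μ)
    (hφ0 : 0 ≤ φ) (r : ℝ) : LowerSemicontinuous fun a => ∫ b in ball a r, φ b ∂μ := by
  -- Some inner ball `ball a (r - 1/(k+1))` already carries integral `> t`, and it stays inside
  -- `ball a' r` for every `a'` within `1/(k+1)` of `a`.
  intro a t ht
  set s : ℕ → Set X := fun k => ball a (r - 1 / (k + 1))
  have hmono : Monotone s := fun k l hkl => ball_subset_ball (by gcongr)
  have hunion : ⋃ k, s k = ball a r := by
    ext b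
    simp only [s, mem_iUnion, mem_ball]
    constructor
    · rintro ⟨k, hk⟩
      linarith [Nat.one_div_pos_of_nat (α := ℝ) (n := k)]
    · intro hb
      obtain ⟨k, hk⟩ := exists_nat_one_div_lt (sub_pos.2 hb)
      exact ⟨k, by linarith⟩
  have htend := tendsto_setIntegral_of_monotone (fun k => isOpen_ball.measurableSet) hmono
    hφ.integrableOn
  rw [hunion] at htend
  obtain ⟨k, hk⟩ := (htend.eventually (eventually_gt_nhds ht)).exists
  filter_upwards [ball_mem_nhds a (Nat.one_div_pos_of_nat (α := ℝ) (n := k))] with a' ha'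
  refine hk.trans_le (setIntegral_mono_set hφ.integrableOn (.of_forall hφ0)
    (ball_subset_ball' ?_).eventuallyLE)
  rw [mem_ball, dist_comm] at ha'
  linarith

theorem measurable_setIntegral_ball (μ : Measure X) {φ : X → ℝ} (hφ : Integrable φ μ) (r : ℝ) :
    Measurable fun a => ∫ b in ball a r, φ b ∂μ := by
  have hsplit : (fun a => ∫ b in ball a r, φ b ∂μ) = fun a =>
      ∫ b in ball a r, max (φ b) 0 ∂μ - ∫ b in ball a r, max (-φ b) 0 ∂μ := by
    funext a
    rw [← integral_sub hφ.pos_part.integrableOn hφ.neg_part.integrableOn]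
    simp_rw [max_zero_sub_max_neg_zero_eq_self]
  rw [hsplit]
  exact (lowerSemicontinuous_setIntegral_ball μ hφ.pos_part (fun b => le_max_right _ _) r
    |>.measurable).sub
    (lowerSemicontinuous_setIntegral_ball μ hφ.neg_part (fun b => le_max_right _ _) r).measurable

theorem integrable_setIntegral_ball_sub_sq (μ : Measure X) [IsFiniteMeasure μ] {f : X → ℝ}
    (hf : MemLp f 2 μ) (r : ℝ) :
    Integrable (fun a => ∫ b in ball a r, (f a - f b) ^ 2 ∂μ) μ := by
  have hvol : Measurable fun a => μ.real (ball a r) := by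
    simpa using measurable_setIntegral_ball μ (integrable_const (1 : ℝ)) r
  have hmean := measurable_setIntegral_ball μ (hf.integrable one_le_two) r
  have hmean_sq := measurable_setIntegral_ball μ hf.integrable_sq r
  have hmeas : AEStronglyMeasurable (fun a => ∫ b in ball a r, (f a - f b) ^ 2 ∂μ) μ := by
    simp_rw [integral_const_sub_sq _ (hf.restrict _), measureReal_restrict_apply_univ]
    exact ((hvol.aestronglyMeasurable.mul (hf.1.pow 2)).sub
      ((hf.1.const_mul 2).mul hmean.aestronglyMeasurable)).add hmean_sq.aestronglyMeasurable
  refine (integrable_integral_sub_sq μ μ hf hf).mono' hmeas (.of_forall fun a => ?_)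
  have hsq : Integrable (fun b => (f a - f b) ^ 2) μ := ((memLp_const _).sub hf).integrable_sq
  rw [Real.norm_of_nonneg (integral_nonneg fun b => sq_nonneg _)]
  exact setIntegral_le_integral hsq (.of_forall fun b => sq_nonneg _)

end Ball

theorem stmt_9_general {X : Type*} [MetricSpace X] [MeasurableSpace X] [BorelSpace X]
    (γ : Measure X) [IsProbabilityMeasure γ]
    (n : ℕ) (x : Fin n → X) (ε : ℝ)
    (U : Fin n → Set X) (hUmeas : ∀ i, MeasurableSet (U i))
    (hUdisj : Pairwise (Function.onFun Disjoint U))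
    (hUcover : (⋃ i, U i) = Set.univ)
    (hUmass : ∀ i, γ (U i) = 1 / n)
    (hUball : ∀ i, U i ⊆ Metric.closedBall (x i) ε)
    (f : X → ℝ) (hf : MemLp f 2 γ) (h : ℝ) :
    (1 / (n : ℝ) ^ 2) * ∑ i, ∑ j,
        (if dist (x i) (x j) < h then (1 : ℝ) else 0) *
          ((n : ℝ) * ∫ z in U i, f z ∂γ - (n : ℝ) * ∫ z in U j, f z ∂γ) ^ 2
      ≤ ∫ a, ∫ b in {b | dist a b < h + 2 * ε}, (f a - f b) ^ 2 ∂γ ∂γ := by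
  rcases Nat.eq_zero_or_pos n with rfl | hpos
  · simpa using integral_nonneg fun a => integral_nonneg fun b => sq_nonneg (f a - f b)
  have hn : (n : ℝ) ≠ 0 := by positivity
  have hmass : ∀ i, γ.real (U i) = 1 / n := fun i => by simp [measureReal_def, hUmass]
  have hcell : ∀ i j, Integrable (fun a => ∫ b in U j, (f a - f b) ^ 2 ∂γ) (γ.restrict (U i)) :=
    fun i j => integrable_integral_sub_sq _ _ (hf.restrict _) (hf.restrict _)
  have hF := integrable_setIntegral_ball_sub_sq γ hf (h + 2 * ε)
  calc _ = ∑ i, ∑ j, (if dist (x i) (x j) < h then (1 : ℝ) else 0) *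
        (∫ z in U i, f z ∂γ - ∫ z in U j, f z ∂γ) ^ 2 := by
        simp_rw [← mul_sub, mul_pow, Finset.mul_sum]
        field_simp
    _ ≤ ∑ i, ∑ j, (if dist (x i) (x j) < h then (1 : ℝ) else 0) *
        ∫ a in U i, ∫ b in U j, (f a - f b) ^ 2 ∂γ ∂γ := by
        gcongr with i _ j _
        exact sq_setIntegral_sub_setIntegral_le γ hf (by rw [hmass, hmass]) (by simp [hmass, hn])
    _ = ∑ i, ∫ a in U i, ∑ j, (if dist (x i) (x j) < h then (1 : ℝ) else 0) *
        ∫ b in U j, (f a - f b) ^ 2 ∂γ ∂γ := by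
        congr! 1 with i
        rw [integral_finsetSum _ fun j _ => (hcell i j).const_mul _]
        simp_rw [integral_const_mul]
    _ ≤ ∑ i, ∫ a in U i, ∫ b in ball a (h + 2 * ε), (f a - f b) ^ 2 ∂γ ∂γ :=
        Finset.sum_le_sum fun i _ => setIntegral_mono_on
          (integrable_finsetSum _ fun j _ => (hcell i j).const_mul _) hF.integrableOn (hUmeas i)
          fun a ha => sum_boole_mul_setIntegral_le_setIntegral_ball γ hUmeas hUdisj hUball
            ((memLp_const _).sub hf).integrable_sq (fun b => sq_nonneg _) ha
    _ = ∫ a, ∫ b in ball a (h + 2 * ε), (f a - f b) ^ 2 ∂γ ∂γ := by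
        rw [← integral_iUnion_fintype hUmeas hUdisj fun i => hF.integrableOn, hUcover,
          Measure.restrict_univ]
    _ = _ := by simp_rw [ball, dist_comm]

theorem stmt_9 {X : Type*} [MetricSpace X] [MeasurableSpace X] [BorelSpace X]
    (γ : Measure X) [IsProbabilityMeasure γ]
    (n : ℕ) (x : Fin n → X) (ε : ℝ) (hε : 0 < ε)
    (U : Fin n → Set X) (hUmeas : ∀ i, MeasurableSet (U i))
    (hUdisj : Pairwise (Function.onFun Disjoint U))
    (hUcover : (⋃ i, U i) = Set.univ)
    (hUmass : ∀ i, γ (U i) = 1 / n)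
    (hUball : ∀ i, U i ⊆ Metric.closedBall (x i) ε)
    (f : X → ℝ) (hf : MemLp f 2 γ) (h : ℝ) (hh : 0 < h) :
    (1 / (n : ℝ) ^ 2) * ∑ i, ∑ j,
        (if dist (x i) (x j) < h then (1 : ℝ) else 0) *
          ((n : ℝ) * ∫ z in U i, f z ∂γ - (n : ℝ) * ∫ z in U j, f z ∂γ) ^ 2
      ≤ ∫ a, ∫ b in {b | dist a b < h + 2 * ε}, (f a - f b) ^ 2 ∂γ ∂γ :=
  stmt_9_general γ n x ε U hUmeas hUdisj hUcover hUmass hUball f hf h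
end

section
/- Let (X, d) be a metric space equipped with a Borel probability measure γ, let x_1, …, x_n ∈ X, let ε > 0, and let U_1, …, U_n be pairwise disjoint measurable sets covering X with γ(U_i) = 1/n and U_i ⊆ {x ∈ X : d(x, x_i) ≤ ε} for each i. For a vector v = (v(x_1), …, v(x_n)) ∈ ℝ^n define the piecewise constant interpolation P*v := Σ_{i=1}^n v(x_i) 1_{U_i}. Then for every h > 2ε: ∬_{{(x,y) : d(x,y) < h − 2ε}} |P*v(x) − P*v(y)|² dγ(x) dγ(y) ≤ (1/n²) Σ_{i=1}^n Σ_{j=1}^n 1{d(x_i,x_j) < h} |v(x_i) − v(x_j)|². -/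
/-! A point `a ∈ U i` and a point `b ∈ U j` at distance `< h - 2ε` force `d(x_i, x_j) < h`,
because each cell lies within `ε` of its centre. So on `U i × U j` the integrand is bounded by
`1{d(x_i, x_j) < h} |v_i - v_j|²`, and integrating this cellwise bound over the product partition,
whose cells have mass `1/n²`, gives the graph Dirichlet energy. -/

open MeasureTheory

section Partition

variable {X ι : Type*} [Fintype ι] {U : ι → Set X}

theorem Finset.sum_indicator_const_apply_of_mem {M : Type*} [AddCommMonoid M]
    (hU : Pairwise (Function.onFun Disjoint U)) (c : ι → M) {i : ι} {a : X} (ha : a ∈ U i) :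
    ∑ j, (U j).indicator (fun _ => c j) a = c i := by
  rw [Finset.sum_eq_single i (fun j _ hji => ?_) (by simp), Set.indicator_of_mem ha]
  exact Set.indicator_of_notMem (Set.disjoint_right.mp (hU hji) ha) _

variable [MeasurableSpace X] {μ : Measure X}

theorem integral_sum_indicator_const (hmeas : ∀ i, MeasurableSet (U i))
    (hfin : ∀ i, μ (U i) ≠ ⊤) (c : ι → ℝ) :
    ∫ a, ∑ i, (U i).indicator (fun _ => c i) a ∂μ = ∑ i, μ.real (U i) * c i := by
  rw [integral_finsetSum _ fun i _ =>
    (integrable_indicator_iff (hmeas i)).mpr (integrableOn_const (hfin i))]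
  simp [hmeas]

theorem integral_le_sum_of_forall_mem_le (hmeas : ∀ i, MeasurableSet (U i))
    (hdisj : Pairwise (Function.onFun Disjoint U)) (hcover : ∀ a, ∃ i, a ∈ U i)
    (hfin : ∀ i, μ (U i) ≠ ⊤) {f : X → ℝ} (hf : 0 ≤ f) {K : ι → ℝ}
    (hfK : ∀ i, ∀ a ∈ U i, f a ≤ K i) :
    ∫ a, f a ∂μ ≤ ∑ i, μ.real (U i) * K i := by
  rw [← integral_sum_indicator_const hmeas hfin]
  refine integral_mono_of_nonneg (.of_forall hf) ?_ (.of_forall fun a => ?_)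
  · exact integrable_finsetSum _ fun i _ =>
      (integrable_indicator_iff (hmeas i)).mpr (integrableOn_const (hfin i))
  · obtain ⟨i, ha⟩ := hcover a
    exact (hfK i a ha).trans_eq (Finset.sum_indicator_const_apply_of_mem hdisj K ha).symm

theorem integral_integral_le_sum_sum_of_forall_mem_le (hmeas : ∀ i, MeasurableSet (U i))
    (hdisj : Pairwise (Function.onFun Disjoint U)) (hcover : ∀ a, ∃ i, a ∈ U i)
    (hfin : ∀ i, μ (U i) ≠ ⊤) {F : X → X → ℝ} (hF : ∀ a b, 0 ≤ F a b) {K : ι → ι → ℝ}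
    (hFK : ∀ i j, ∀ a ∈ U i, ∀ b ∈ U j, F a b ≤ K i j) :
    ∫ a, ∫ b, F a b ∂μ ∂μ ≤ ∑ i, μ.real (U i) * ∑ j, μ.real (U j) * K i j :=
  integral_le_sum_of_forall_mem_le hmeas hdisj hcover hfin
    (fun a => integral_nonneg (hF a)) fun i a ha =>
      integral_le_sum_of_forall_mem_le hmeas hdisj hcover hfin (hF a) fun j b hb =>
        hFK i j a ha b hb

end Partition

theorem dist_lt_of_mem_closedBall_of_dist_lt_sub {X : Type*} [PseudoMetricSpace X]
    {a b p q : X} {ε h : ℝ} (ha : a ∈ Metric.closedBall p ε) (hb : b ∈ Metric.closedBall q ε)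
    (hab : dist a b < h - 2 * ε) : dist p q < h := by
  have hpa : dist p a ≤ ε := dist_comm a p ▸ ha
  have hbq : dist b q ≤ ε := hb
  linarith [dist_triangle4 p a b q]

theorem stmt_11_general {X : Type*} [MetricSpace X] [MeasurableSpace X] [BorelSpace X]
    (γ : Measure X)
    (n : ℕ) (x : Fin n → X) (ε : ℝ)
    (U : Fin n → Set X) (hUmeas : ∀ i, MeasurableSet (U i))
    (hUdisj : Pairwise (Function.onFun Disjoint U))
    (hUcover : (⋃ i, U i) = Set.univ)
    (hUmass : ∀ i, γ (U i) = 1 / n)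
    (hUball : ∀ i, U i ⊆ Metric.closedBall (x i) ε)
    (v : Fin n → ℝ) (h : ℝ) :
    ∫ a, ∫ b in {b | dist a b < h - 2 * ε},
        ((∑ i, Set.indicator (U i) (fun _ => v i) a)
          - (∑ i, Set.indicator (U i) (fun _ => v i) b)) ^ 2 ∂γ ∂γ
      ≤ (1 / (n : ℝ) ^ 2) * ∑ i, ∑ j,
          (if dist (x i) (x j) < h then (1 : ℝ) else 0) * (v i - v j) ^ 2 := by
  set P : X → ℝ := fun a => ∑ i, (U i).indicator (fun _ => v i) a
  have hfin (i : Fin n) : γ (U i) ≠ ⊤ := by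
    simp [hUmass, Fin.pos_iff_nonempty.mpr ⟨i⟩ |>.ne']
  have hreal (i : Fin n) : γ.real (U i) = 1 / n := by simp [measureReal_def, hUmass]
  have hbound (i j : Fin n) (a : X) (ha : a ∈ U i) (b : X) (hb : b ∈ U j) :
      {b | dist a b < h - 2 * ε}.indicator (fun b => (P a - P b) ^ 2) b
        ≤ (if dist (x i) (x j) < h then (1 : ℝ) else 0) * (v i - v j) ^ 2 := by
    by_cases hab : dist a b < h - 2 * ε
    · have hij := dist_lt_of_mem_closedBall_of_dist_lt_sub (hUball i ha) (hUball j hb) hab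
      simp [hab, hij, P, Finset.sum_indicator_const_apply_of_mem hUdisj v ha,
        Finset.sum_indicator_const_apply_of_mem hUdisj v hb]
    · rw [Set.indicator_of_notMem (show b ∉ {b | dist a b < h - 2 * ε} from hab)]
      positivity
  calc ∫ a, ∫ b in {b | dist a b < h - 2 * ε}, (P a - P b) ^ 2 ∂γ ∂γ
      = ∫ a, ∫ b, {b | dist a b < h - 2 * ε}.indicator (fun b => (P a - P b) ^ 2) b ∂γ ∂γ := by
        congr 1 with a
        exact (integral_indicator
          (isOpen_lt (continuous_const.dist continuous_id) continuous_const).measurableSet).symm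
    _ ≤ _ := integral_integral_le_sum_sum_of_forall_mem_le hUmeas hUdisj
        (Set.iUnion_eq_univ_iff.mp hUcover) hfin
        (fun a b => Set.indicator_nonneg (fun _ _ => sq_nonneg _) b) hbound
    _ = _ := by simp only [hreal, Finset.mul_sum]; ring_nf

theorem stmt_11 {X : Type*} [MetricSpace X] [MeasurableSpace X] [BorelSpace X]
    (γ : Measure X) [IsProbabilityMeasure γ]
    (n : ℕ) (x : Fin n → X) (ε : ℝ) (hε : 0 < ε)
    (U : Fin n → Set X) (hUmeas : ∀ i, MeasurableSet (U i))
    (hUdisj : Pairwise (Function.onFun Disjoint U))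
    (hUcover : (⋃ i, U i) = Set.univ)
    (hUmass : ∀ i, γ (U i) = 1 / n)
    (hUball : ∀ i, U i ⊆ Metric.closedBall (x i) ε)
    (v : Fin n → ℝ) (h : ℝ) (hh : 2 * ε < h) :
    ∫ a, ∫ b in {b | dist a b < h - 2 * ε},
        ((∑ i, Set.indicator (U i) (fun _ => v i) a)
          - (∑ i, Set.indicator (U i) (fun _ => v i) b)) ^ 2 ∂γ ∂γ
      ≤ (1 / (n : ℝ) ^ 2) * ∑ i, ∑ j,
          (if dist (x i) (x j) < h then (1 : ℝ) else 0) * (v i - v j) ^ 2 :=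
  stmt_11_general γ n x ε U hUmeas hUdisj hUcover hUmass hUball v h
end

section
/- Let H and F be real inner product spaces, and let D_H : H → ℝ and D_F : F → ℝ be the quadratic forms of symmetric bilinear forms on H and F respectively. Let k ≥ 1 be an integer, λ ≥ 0, δ ∈ [0,1), η ≥ 0. Suppose V ⊆ H is a k-dimensional subspace such that D_H(f) ≤ λ‖f‖² for all f ∈ V, and P : H → F is a linear map satisfying ‖Pf‖ ≥ (1−δ)‖f‖ and D_F(Pf) ≤ (1+η) D_H(f) for all f ∈ V. Then the restriction of P to V is injective, W := P(V) is a k-dimensional subspace of F, and D_F(w) ≤ ((1+η)λ/(1−δ)²) ‖w‖² for all w ∈ W. Consequently, the k-th min-max value inf{ sup{ D_F(w)/‖w‖² : w ∈ W', w ≠ 0 } : W' ⊆ F a k-dimensional subspace } is at most (1+η)λ/(1−δ)². -/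
theorem stmt_12 {H F : Type*}
    [NormedAddCommGroup H] [InnerProductSpace ℝ H]
    [NormedAddCommGroup F] [InnerProductSpace ℝ F]
    (BH : LinearMap.BilinForm ℝ H) (hBH : ∀ x y, BH x y = BH y x)
    (BF : LinearMap.BilinForm ℝ F) (hBF : ∀ x y, BF x y = BF y x)
    (k : ℕ) (hk : 1 ≤ k) (lam : ℝ) (hlam : 0 ≤ lam)
    (δ : ℝ) (hδ0 : 0 ≤ δ) (hδ1 : δ < 1) (η : ℝ) (hη : 0 ≤ η)
    (V : Submodule ℝ H) [FiniteDimensional ℝ V] (hV : Module.finrank ℝ V = k)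
    (P : H →ₗ[ℝ] F)
    (hRayleigh : ∀ f ∈ V, BH f f ≤ lam * ‖f‖ ^ 2)
    (hIso : ∀ f ∈ V, (1 - δ) * ‖f‖ ≤ ‖P f‖)
    (hEnergy : ∀ f ∈ V, BF (P f) (P f) ≤ (1 + η) * BH f f) :
    Set.InjOn P V ∧
    Module.finrank ℝ (V.map P) = k ∧
    (∀ w ∈ V.map P, BF w w ≤ ((1 + η) * lam / (1 - δ) ^ 2) * ‖w‖ ^ 2) ∧
    ∃ W : Submodule ℝ F, Module.finrank ℝ W = k ∧
      ∀ w ∈ W, w ≠ 0 → BF w w / ‖w‖ ^ 2 ≤ (1 + η) * lam / (1 - δ) ^ 2 := by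
  have h1δ : 0 < 1 - δ := by linarith
  have hinj0 : ∀ f ∈ V, P f = 0 → f = 0 := by
    intro f hf hPf
    have h := hIso f hf
    rw [hPf, norm_zero] at h
    have hle : ‖f‖ ≤ 0 := by nlinarith [norm_nonneg f]
    have : ‖f‖ = 0 := le_antisymm hle (norm_nonneg f)
    simpa using this
  have hInjOn : Set.InjOn P V := by
    intro x hx y hy hxy
    have hsub : x - y ∈ V := V.sub_mem hx hy
    have hz : P (x - y) = 0 := by simp [map_sub, hxy]
    have := hinj0 _ hsub hz
    exact sub_eq_zero.mp this
  have hrank : Module.finrank ℝ (V.map P) = k := by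
    have hinj : Function.Injective (P.comp V.subtype) := by
      rw [← LinearMap.ker_eq_bot, LinearMap.ker_eq_bot']
      intro m hm
      have hm0 : P (m : H) = 0 := hm
      have := hinj0 (m : H) m.2 hm0
      exact Subtype.ext this
    have hr : LinearMap.range (P.comp V.subtype) = V.map P := by
      rw [LinearMap.range_comp, Submodule.range_subtype]
    have := LinearMap.finrank_range_of_inj hinj
    rw [hr] at this
    rw [this, hV]
  have hbound : ∀ w ∈ V.map P, BF w w ≤ ((1 + η) * lam / (1 - δ) ^ 2) * ‖w‖ ^ 2 := by
    rintro w ⟨f, hf, rfl⟩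
    have h1 := hEnergy f hf
    have h2 := hRayleigh f hf
    have h3 := hIso f hf
    have hη1 : (0:ℝ) ≤ 1 + η := by linarith
    have hfn : ‖f‖ ^ 2 * (1 - δ) ^ 2 ≤ ‖P f‖ ^ 2 := by
      have := pow_le_pow_left₀ (by positivity) h3 2
      calc ‖f‖ ^ 2 * (1 - δ) ^ 2 = ((1 - δ) * ‖f‖) ^ 2 := by ring
        _ ≤ ‖P f‖ ^ 2 := this
    rw [div_mul_eq_mul_div, le_div_iff₀ (by positivity)]
    have a1 : BF (P f) (P f) * (1 - δ) ^ 2 ≤ (1 + η) * BH f f * (1 - δ) ^ 2 :=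
      mul_le_mul_of_nonneg_right h1 (sq_nonneg _)
    have a3 : (1 + η) * BH f f * (1 - δ) ^ 2 ≤ (1 + η) * (lam * ‖f‖ ^ 2) * (1 - δ) ^ 2 :=
      mul_le_mul_of_nonneg_right (mul_le_mul_of_nonneg_left h2 hη1) (sq_nonneg _)
    have a4 : (1 + η) * lam * (‖f‖ ^ 2 * (1 - δ) ^ 2) ≤ (1 + η) * lam * ‖P f‖ ^ 2 :=
      mul_le_mul_of_nonneg_left hfn (mul_nonneg hη1 hlam)
    nlinarith [a1, a3, a4]
  refine ⟨hInjOn, hrank, hbound, V.map P, hrank, ?_⟩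
  intro w hw hw0
  have hpos : (0:ℝ) < ‖w‖ ^ 2 := pow_pos (norm_pos_iff.mpr hw0) 2
  rw [div_le_iff₀ hpos]
  calc BF w w ≤ ((1 + η) * lam / (1 - δ) ^ 2) * ‖w‖ ^ 2 := hbound w hw
    _ = (1 + η) * lam / (1 - δ) ^ 2 * ‖w‖ ^ 2 := rfl
end

section
/- Let F be a finite-dimensional real inner product space and L : F → F a symmetric positive semidefinite linear endomorphism. Let λ ≥ 0 and suppose v ∈ F lies in the sum of the eigenspaces of L corresponding to eigenvalues at most λ. Then for every w ∈ F: √⟨w, Lw⟩ ≥ √⟨v, Lv⟩ − √λ · ‖w − v‖. -/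
/-!
In an orthonormal eigenbasis of `L` the form `⟪x, L x⟫` is `∑ μᵢ xᵢ²` with `μᵢ ≥ 0`, and `v` has no
coordinates along eigenvalues `μᵢ > λ`. Dropping those eigenvalues from the weights gives a smaller
form `q_λ`, whose square root is a seminorm with `q_λ(x) ≤ λ ‖x‖²`, and which agrees with the full
form at `v`. Hence `√q(v) = √q_λ(v) ≤ √q_λ(w) + √q_λ(v - w) ≤ √q(w) + √λ ‖w - v‖`.
-/

open scoped RealInnerProductSpace

open Finset Module

section WeightedSums

variable {ι : Type*} [Fintype ι]

theorem sqrt_sum_mul_sq_add_le {w : ι → ℝ} (hw : ∀ i, 0 ≤ w i) (x y : ι → ℝ) :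
    √(∑ i, w i * (x i + y i) ^ 2) ≤ √(∑ i, w i * x i ^ 2) + √(∑ i, w i * y i ^ 2) := by
  let S : (ι → ℝ) → EuclideanSpace ℝ ι := fun z => WithLp.toLp 2 fun i => √(w i) * z i
  have hS : ∀ z, ‖S z‖ = √(∑ i, w i * z i ^ 2) := fun z => by
    simp [S, EuclideanSpace.norm_eq, mul_pow, Real.sq_sqrt (hw _)]
  have hadd : S (x + y) = S x + S y := by ext i; simp [S, mul_add]
  have := norm_add_le (S x) (S y)
  rwa [← hadd, hS, hS, hS] at this

theorem sqrt_sum_mul_sq_sub_le {μ : ι → ℝ} (hμ : ∀ i, 0 ≤ μ i) {lam : ℝ} (hlam : 0 ≤ lam)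
    {c : ι → ℝ} (hc : ∀ i, lam < μ i → c i = 0) (a : ι → ℝ) :
    √(∑ i, μ i * c i ^ 2) - √lam * √(∑ i, (a i - c i) ^ 2) ≤ √(∑ i, μ i * a i ^ 2) := by
  -- the weights of `q_λ`
  set ν : ι → ℝ := fun i => if μ i ≤ lam then μ i else 0
  have hν : ∀ i, 0 ≤ ν i := fun i => by
    by_cases h : μ i ≤ lam <;> simp [ν, h, hμ i]
  have hc_eq : ∑ i, μ i * c i ^ 2 = ∑ i, ν i * (a i + (c i - a i)) ^ 2 :=
    sum_congr rfl fun i _ => by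
      by_cases h : μ i ≤ lam
      · simp [ν, h]
      · simp [ν, h, hc i (not_le.mp h)]
  have ha_le : ∑ i, ν i * a i ^ 2 ≤ ∑ i, μ i * a i ^ 2 := sum_le_sum fun i _ => by
    by_cases h : μ i ≤ lam
    · simp [ν, h]
    · simpa [ν, h] using mul_nonneg (hμ i) (sq_nonneg (a i))
  have hca_le : ∑ i, ν i * (c i - a i) ^ 2 ≤ lam * ∑ i, (a i - c i) ^ 2 := by
    rw [mul_sum]
    refine sum_le_sum fun i _ => ?_
    rw [← neg_sub, neg_sq]
    by_cases h : μ i ≤ lam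
    · simpa [ν, h] using mul_le_mul_of_nonneg_right h (sq_nonneg (a i - c i))
    · simpa [ν, h] using mul_nonneg hlam (sq_nonneg (a i - c i))
  have hsqrt_le : √(∑ i, ν i * (c i - a i) ^ 2) ≤ √lam * √(∑ i, (a i - c i) ^ 2) := by
    rw [← Real.sqrt_mul hlam]
    exact Real.sqrt_le_sqrt hca_le
  rw [sub_le_iff_le_add]
  calc √(∑ i, μ i * c i ^ 2)
      ≤ √(∑ i, ν i * a i ^ 2) + √(∑ i, ν i * (c i - a i) ^ 2) := by
        rw [hc_eq]; exact sqrt_sum_mul_sq_add_le hν _ _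
    _ ≤ √(∑ i, μ i * a i ^ 2) + √lam * √(∑ i, (a i - c i) ^ 2) :=
        add_le_add (Real.sqrt_le_sqrt ha_le) hsqrt_le

end WeightedSums

namespace LinearMap.IsSymmetric

variable {F : Type*} [NormedAddCommGroup F] [InnerProductSpace ℝ F] [FiniteDimensional ℝ F]
  {L : F →ₗ[ℝ] F} (hL : L.IsSymmetric) {n : ℕ} (hn : finrank ℝ F = n)
include hL hn

theorem inner_apply_self_eq_sum_eigenvalues_mul_sq (x : F) :
    ⟪x, L x⟫ = ∑ i, hL.eigenvalues hn i * (hL.eigenvectorBasis hn).repr x i ^ 2 := by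
  rw [← (hL.eigenvectorBasis hn).sum_inner_mul_inner x (L x)]
  refine sum_congr rfl fun i _ => ?_
  rw [← hL, hL.apply_eigenvectorBasis, real_inner_smul_left, OrthonormalBasis.repr_apply_apply,
    real_inner_comm x, RCLike.ofReal_real_eq_id, id_eq]
  ring

theorem eigenvectorBasis_repr_eq_zero_of_mem_iSup_eigenspace {lam : ℝ} {v : F}
    (hv : v ∈ ⨆ (μ : ℝ) (_ : μ ≤ lam), Module.End.eigenspace L μ) {i : Fin n}
    (hi : lam < hL.eigenvalues hn i) : (hL.eigenvectorBasis hn).repr v i = 0 := by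
  have hle : (⨆ (μ : ℝ) (_ : μ ≤ lam), Module.End.eigenspace L μ) ≤
      (Module.End.eigenspace L (hL.eigenvalues hn i))ᗮ :=
    iSup₂_le fun μ hμ => Submodule.isOrtho_iff_le.mp
      (hL.orthogonalFamily_eigenspaces.isOrtho (hμ.trans_lt hi).ne)
  rw [OrthonormalBasis.repr_apply_apply]
  exact Submodule.inner_right_of_mem_orthogonal
    (hL.hasEigenvector_eigenvectorBasis hn i).1 (hle hv)

end LinearMap.IsSymmetric

theorem stmt_16 {F : Type*} [NormedAddCommGroup F] [InnerProductSpace ℝ F]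
    [FiniteDimensional ℝ F]
    (L : F →ₗ[ℝ] F) (hsym : ∀ x y : F, ⟪L x, y⟫ = ⟪x, L y⟫)
    (hpsd : ∀ x : F, 0 ≤ ⟪x, L x⟫) (lam : ℝ) (hlam : 0 ≤ lam)
    (v : F) (hv : v ∈ ⨆ (μ : ℝ) (_ : μ ≤ lam), Module.End.eigenspace L μ) :
    ∀ w : F, Real.sqrt ⟪v, L v⟫ - Real.sqrt lam * ‖w - v‖ ≤ Real.sqrt ⟪w, L w⟫ := by
  intro w
  have hL : L.IsSymmetric := hsym
  set b := hL.eigenvectorBasis rfl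
  have hμ : ∀ i, 0 ≤ hL.eigenvalues rfl i := fun i =>
    eigenvalue_nonneg_of_nonneg (hL.hasEigenvalue_eigenvalues rfl i) hpsd
  have hnorm : ‖w - v‖ = √(∑ i, (b.repr w i - b.repr v i) ^ 2) := by
    rw [← b.repr.norm_map, EuclideanSpace.norm_eq]
    simp
  rw [hL.inner_apply_self_eq_sum_eigenvalues_mul_sq rfl v,
    hL.inner_apply_self_eq_sum_eigenvalues_mul_sq rfl w, hnorm]
  exact sqrt_sum_mul_sq_sub_le hμ hlam
    (fun i => hL.eigenvectorBasis_repr_eq_zero_of_mem_iSup_eigenspace rfl hv) _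
end
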